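/- arXiv:math/0702403 — 3 statements merged into one kernel-verified Lean document; each statement's English description precedes it below -/
import Mathlib

section
/- Let μ be a probability measure, h a probability density with respect to μ (h ≥ 0, ∫ h dμ = 1), and H = Ent_μ(h). If K ≥ e² and log K ≥ 4H, then ∫ h · 1_{h > K} dμ ≤ 2H / log K, and consequently ∫ h · 1_{h ≤ K} dμ ≥ 1/2. -/
/-! The function `x log x - x + 1` is nonnegative on `[0, ∞)` and has integral `H` against `μ`,
while on `{h > K}` it dominates `h (log K - 1)`. Hence `(log K - 1) ∫ h 1_{h>K} ≤ H`, and
`log K ≥ 2` turns this into `∫ h 1_{h>K} ≤ 2H / log K ≤ 1/2`. -/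

open MeasureTheory Real

namespace Real

lemma mul_log_sub_add_one_nonneg {x : ℝ} (hx : 0 ≤ x) : 0 ≤ x * log x - x + 1 := by
  linarith [self_sub_one_le_mul_log hx]

lemma mul_sub_one_le_mul_log_sub_add_one {K x : ℝ} (hK : 0 < K) (hKx : K ≤ x) :
    x * (log K - 1) ≤ x * log x - x + 1 := by
  have : x * log K ≤ x * log x :=
    mul_le_mul_of_nonneg_left (log_le_log hK hKx) (hK.le.trans hKx)
  linarith

end Real

namespace MeasureTheory

variable {Ω : Type*} [MeasurableSpace Ω] {μ : Measure Ω} {h : Ω → ℝ}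

lemma integral_mul_log_sub_add_one [IsProbabilityMeasure μ] (hh : Integrable h μ)
    (hint : ∫ x, h x ∂μ = 1) (hent : Integrable (fun x => h x * log (h x)) μ) :
    ∫ x, (h x * log (h x) - h x + 1) ∂μ = ∫ x, h x * log (h x) ∂μ := by
  have hsub : Integrable (fun x => h x * log (h x) - h x) μ := hent.sub hh
  rw [integral_add hsub (integrable_const 1), integral_sub hent hh, hint]
  simp

lemma integral_indicator_gt_mul_le_integral_mul_log [IsProbabilityMeasure μ]
    (hh : Integrable h μ) (h0 : ∀ x, 0 ≤ h x) (hint : ∫ x, h x ∂μ = 1)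
    (hent : Integrable (fun x => h x * log (h x)) μ) {K : ℝ} (hK : 0 < K) :
    (∫ x, {y | K < h y}.indicator h x ∂μ) * (log K - 1) ≤ ∫ x, h x * log (h x) ∂μ := by
  have hS : NullMeasurableSet {y | K < h y} μ :=
    nullMeasurableSet_lt aemeasurable_const hh.aemeasurable
  have hdom : ∀ x, {y | K < h y}.indicator h x * (log K - 1) ≤ h x * log (h x) - h x + 1 := by
    intro x
    by_cases hx : K < h x
    · rw [Set.indicator_of_mem (show x ∈ {y | K < h y} from hx)]
      exact mul_sub_one_le_mul_log_sub_add_one hK hx.le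
    · rw [Set.indicator_of_notMem (show x ∉ {y | K < h y} from hx), zero_mul]
      exact mul_log_sub_add_one_nonneg (h0 x)
  rw [← integral_mul_log_sub_add_one hh hint hent, ← integral_mul_const]
  exact integral_mono ((hh.indicator₀ hS).mul_const _)
    ((hent.sub hh).add (integrable_const 1)) hdom

lemma integral_indicator_le_eq_one_sub (hh : Integrable h μ) (hint : ∫ x, h x ∂μ = 1) (K : ℝ) :
    ∫ x, {y | h y ≤ K}.indicator h x ∂μ = 1 - ∫ x, {y | K < h y}.indicator h x ∂μ := by
  have hS : NullMeasurableSet {y | K < h y} μ :=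
    nullMeasurableSet_lt aemeasurable_const hh.aemeasurable
  have hcompl : {y | h y ≤ K} = {y | K < h y}ᶜ := by
    ext y
    simp
  rw [hcompl, integral_indicator₀ hS.compl, integral_indicator₀ hS, ← hint,
    ← integral_add_compl₀ hS hh, add_sub_cancel_left]

end MeasureTheory

theorem truncation_bounds_general {Ω : Type*} [MeasurableSpace Ω] (μ : Measure Ω)
    [IsProbabilityMeasure μ] (h : Ω → ℝ)
    (h0 : ∀ x, 0 ≤ h x) (hint : ∫ x, h x ∂μ = 1)
    (hent : Integrable (fun x => h x * Real.log (h x)) μ)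
    (H : ℝ) (hH : H = ∫ x, h x * Real.log (h x) ∂μ)
    (K : ℝ) (hK : Real.exp 2 ≤ K) (hKH : 4 * H ≤ Real.log K) :
    (∫ x, Set.indicator {y | K < h y} h x ∂μ ≤ 2 * H / Real.log K) ∧
    (1 / 2 ≤ ∫ x, Set.indicator {y | h y ≤ K} h x ∂μ) := by
  have hh : Integrable h μ := .of_integral_ne_zero (by simp [hint])
  have hlogK : 2 ≤ log K := by
    simpa using log_le_log (exp_pos 2) hK
  set A := ∫ x, Set.indicator {y | K < h y} h x ∂μ
  have hA0 : 0 ≤ A := integral_nonneg fun x => Set.indicator_apply_nonneg fun _ => h0 x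
  have hAH : A * (log K - 1) ≤ H := hH ▸
    integral_indicator_gt_mul_le_integral_mul_log hh h0 hint hent ((exp_pos 2).trans_le hK)
  have hbound : A ≤ 2 * H / log K := by
    rw [le_div_iff₀ (by linarith)]
    nlinarith
  have hhalf : 2 * H / log K ≤ 1 / 2 := by
    rw [div_le_iff₀ (by linarith)]
    linarith
  refine ⟨hbound, ?_⟩
  rw [integral_indicator_le_eq_one_sub hh hint K]
  linarith

/-- Truncation bounds for a probability density with finite entropy:
if `K ≥ e²` and `log K ≥ 4H` where `H = ∫ h log h dμ`, then
`∫ h 1_{h>K} dμ ≤ 2H/log K` and `∫ h 1_{h≤K} dμ ≥ 1/2`. -/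
theorem truncation_bounds {Ω : Type*} [MeasurableSpace Ω] (μ : Measure Ω)
    [IsProbabilityMeasure μ] (h : Ω → ℝ) (hmeas : Measurable h)
    (h0 : ∀ x, 0 ≤ h x) (hint : ∫ x, h x ∂μ = 1)
    (hent : Integrable (fun x => h x * Real.log (h x)) μ)
    (H : ℝ) (hH : H = ∫ x, h x * Real.log (h x) ∂μ)
    (K : ℝ) (hK : Real.exp 2 ≤ K) (hKH : 4 * H ≤ Real.log K) :
    (∫ x, Set.indicator {y | K < h y} h x ∂μ ≤ 2 * H / Real.log K) ∧
    (1 / 2 ≤ ∫ x, Set.indicator {y | h y ≤ K} h x ∂μ) :=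
  truncation_bounds_general μ h h0 hint hent H hH K hK hKH
end

section
/- Let μ be a probability measure on ℤ (or ℕ) with μ(x) = (1/Z) exp(−x^α) for α ∈ (0,1). Then there exist constants k ≥ 1 such that for all x ≥ 1: (1/k) x^{1−α} exp(−x^α) ≤ Σ_{y ≥ x} μ(y) ≤ k x^{1−α} exp(−x^α). -/
open Real

/-! Write `S x = ∑ₙ exp (-(x + n) ^ α)` and `t = α x ^ (α - 1)`, the slope of `y ↦ y ^ α` at `x`.
By concavity `(x + n) ^ α ≤ x ^ α + t n`, so `S x` dominates the geometric series
`exp (-x ^ α) ∑ₙ exp (-t) ^ n ≥ exp (-x ^ α) / t`. Conversely `(x + n) ^ α - x ^ α` is at least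
`α n (x + n) ^ (α - 1)`, hence at least `t n / 2` when `n ≤ x` and `α n ^ α / 2` when `n ≥ x`; the
first range contributes a geometric series of size `1 + 2 / t` and the second a convergent series
independent of `x`. As `1 / t = x ^ (1 - α) / α ≥ 1 / α`, both bounds are of order
`x ^ (1 - α) exp (-x ^ α)`, and dividing by `Z` gives the estimate for `μ`. -/

lemma summable_exp_neg_mul_rpow {α c : ℝ} (hα : 0 < α) (hc : 0 < c) :
    Summable fun n : ℕ => exp (-(c * (n : ℝ) ^ α)) := by
  have hpow : ∀ n : ℕ, ((n : ℝ) ^ α) ^ (-2 / α) = (n : ℝ) ^ (-2 : ℝ) := fun n => by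
    rw [← rpow_mul n.cast_nonneg, mul_div_cancel₀ _ hα.ne']
  have h := ((isLittleO_exp_neg_mul_rpow_atTop hc (-2 / α)).comp_tendsto
    ((tendsto_rpow_atTop hα).comp tendsto_natCast_atTop_atTop)).isBigO
  refine summable_of_isBigO_nat (summable_nat_rpow.2 (by norm_num : (-2 : ℝ) < -1)) ?_
  simpa [Function.comp_def, hpow, neg_mul] using h

lemma rpow_add_le_rpow_add_mul_rpow_sub_one {p a b : ℝ} (hp0 : 0 ≤ p) (hp1 : p ≤ 1)
    (ha : 0 < a) (hab : 0 ≤ a + b) : (a + b) ^ p ≤ a ^ p + p * a ^ (p - 1) * b := by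
  have hs : -1 ≤ b / a := by rw [le_div_iff₀ ha]; linarith
  calc (a + b) ^ p = a ^ p * (1 + b / a) ^ p := by
        rw [← mul_rpow ha.le (by linarith), mul_add, mul_one, mul_div_cancel₀ _ ha.ne']
    _ ≤ a ^ p * (1 + p * (b / a)) :=
        mul_le_mul_of_nonneg_left (rpow_one_add_le_one_add_mul_self hs hp0 hp1) (by positivity)
    _ = a ^ p + p * a ^ (p - 1) * b := by
        rw [rpow_sub ha, rpow_one]; field_simp

lemma rpow_add_mul_max_rpow_sub_one_le {p a b : ℝ} (hp0 : 0 ≤ p) (hp1 : p ≤ 1)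
    (ha : 0 < a) (hb : 0 ≤ b) : a ^ p + p / 2 * b * max a b ^ (p - 1) ≤ (a + b) ^ p := by
  have hm : 0 < max a b := lt_max_of_lt_left ha
  have tangent := rpow_add_le_rpow_add_mul_rpow_sub_one hp0 hp1 (a := a + b) (b := -b)
    (by linarith) (by linarith)
  have hhalf : max a b ^ (p - 1) / 2 ≤ (a + b) ^ (p - 1) := calc
    max a b ^ (p - 1) / 2 = 2 ^ (-1 : ℝ) * max a b ^ (p - 1) := by rw [rpow_neg_one]; ring
    _ ≤ 2 ^ (p - 1) * max a b ^ (p - 1) := by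
        gcongr
        · norm_num
        · linarith
    _ = (2 * max a b) ^ (p - 1) := (mul_rpow (by norm_num) hm.le).symm
    _ ≤ (a + b) ^ (p - 1) := rpow_le_rpow_of_nonpos (by positivity)
        (by linarith [le_max_left a b, le_max_right a b]) (by linarith)
  have := mul_le_mul_of_nonneg_left hhalf (mul_nonneg hp0 hb)
  rw [add_neg_cancel_right] at tangent
  linarith

lemma inv_le_tsum_exp_neg_pow {t : ℝ} (ht : 0 < t) : t⁻¹ ≤ ∑' n : ℕ, exp (-t) ^ n := by
  rw [tsum_geometric_of_lt_one (exp_pos _).le (exp_lt_one_iff.2 (by linarith))]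
  exact inv_anti₀ (by linarith [exp_lt_one_iff.2 (neg_lt_zero.2 ht)])
    (by linarith [add_one_le_exp (-t)])

lemma tsum_exp_neg_pow_le {t : ℝ} (ht : 0 < t) : ∑' n : ℕ, exp (-t) ^ n ≤ 1 + t⁻¹ := by
  rw [tsum_geometric_of_lt_one (exp_pos _).le (exp_lt_one_iff.2 (by linarith))]
  have h : t / (1 + t) ≤ 1 - exp (-t) := by
    rw [div_le_iff₀ (by linarith), exp_neg]
    have := add_one_le_exp t
    have := exp_pos t
    field_simp
    nlinarith
  calc (1 - exp (-t))⁻¹ ≤ (t / (1 + t))⁻¹ := inv_anti₀ (by positivity) h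
    _ = 1 + t⁻¹ := by field_simp; ring

lemma inv_mul_rpow_sub_one {α x : ℝ} (hx : 0 < x) : (α * x ^ (α - 1))⁻¹ = x ^ (1 - α) / α := by
  rw [mul_inv, ← rpow_neg hx.le, neg_sub, div_eq_inv_mul]

section Tail

variable {α x : ℝ} (hα0 : 0 < α) (hα1 : α ≤ 1)
include hα0 hα1

lemma exp_neg_rpow_mul_exp_neg_pow_le (hx : 0 < x) (n : ℕ) :
    exp (-x ^ α) * exp (-(α * x ^ (α - 1))) ^ n ≤ exp (-(x + n) ^ α) := by
  have := rpow_add_le_rpow_add_mul_rpow_sub_one hα0.le hα1 hx (by positivity : 0 ≤ x + n)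
  rw [← exp_nat_mul, ← exp_add, exp_le_exp]
  linarith

lemma exp_neg_add_rpow_le (hx : 0 < x) (n : ℕ) :
    exp (-(x + n) ^ α) ≤
      exp (-x ^ α) * (exp (-(α * x ^ (α - 1) / 2)) ^ n + exp (-(α / 2 * (n : ℝ) ^ α))) := by
  have key := rpow_add_mul_max_rpow_sub_one_le hα0.le hα1 hx n.cast_nonneg
  have hle : exp (-(x + n) ^ α) ≤ exp (-x ^ α) * exp (-(α / 2 * n * max x n ^ (α - 1))) := by
    rw [← exp_add, exp_le_exp]; linarith
  refine hle.trans (mul_le_mul_of_nonneg_left ?_ (exp_pos _).le)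
  rcases le_total (n : ℝ) x with hn | hn
  · rw [max_eq_left hn, ← exp_nat_mul]
    exact le_add_of_le_of_nonneg (le_of_eq (congrArg exp (by ring))) (exp_pos _).le
  · have hn0 : (n : ℝ) ≠ 0 := (hx.trans_le hn).ne'
    rw [max_eq_right hn, rpow_sub_one hn0, mul_assoc, mul_div_cancel₀ _ hn0]
    exact le_add_of_nonneg_left (by positivity)

lemma summable_exp_neg_add_rpow (hx : 0 < x) : Summable fun n : ℕ => exp (-(x + n) ^ α) :=
  .of_nonneg_of_le (fun _ => (exp_pos _).le) (exp_neg_add_rpow_le hα0 hα1 hx)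
    (((summable_geometric_of_lt_one (exp_pos _).le
      (exp_lt_one_iff.2 (by simp; positivity))).add
      (summable_exp_neg_mul_rpow hα0 (half_pos hα0))).mul_left _)

lemma rpow_mul_exp_neg_rpow_div_le_tsum (hx : 0 < x) :
    x ^ (1 - α) * exp (-x ^ α) / α ≤ ∑' n : ℕ, exp (-(x + n) ^ α) := by
  have ht : 0 < α * x ^ (α - 1) := by positivity
  calc x ^ (1 - α) * exp (-x ^ α) / α = exp (-x ^ α) * (α * x ^ (α - 1))⁻¹ := by
        rw [inv_mul_rpow_sub_one hx]; ring
    _ ≤ exp (-x ^ α) * ∑' n : ℕ, exp (-(α * x ^ (α - 1))) ^ n :=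
        mul_le_mul_of_nonneg_left (inv_le_tsum_exp_neg_pow ht) (exp_pos _).le
    _ = ∑' n : ℕ, exp (-x ^ α) * exp (-(α * x ^ (α - 1))) ^ n := tsum_mul_left.symm
    _ ≤ ∑' n : ℕ, exp (-(x + n) ^ α) :=
        (summable_geometric_of_lt_one (exp_pos _).le (exp_lt_one_iff.2 (by linarith))).mul_left _
          |>.tsum_le_tsum (exp_neg_rpow_mul_exp_neg_pow_le hα0 hα1 hx)
            (summable_exp_neg_add_rpow hα0 hα1 hx)

lemma exists_tsum_le_rpow_mul_exp_neg_rpow :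
    ∃ K, ∀ x : ℝ, 1 ≤ x → ∑' n : ℕ, exp (-(x + n) ^ α) ≤ K * x ^ (1 - α) * exp (-x ^ α) := by
  set C := ∑' n : ℕ, exp (-(α / 2 * (n : ℝ) ^ α))
  have hC : Summable fun n : ℕ => exp (-(α / 2 * (n : ℝ) ^ α)) :=
    summable_exp_neg_mul_rpow hα0 (half_pos hα0)
  refine ⟨2 / α + 1 + C, fun x hx => ?_⟩
  have hx0 : 0 < x := one_pos.trans_le hx
  have ht : 0 < α * x ^ (α - 1) / 2 := by positivity
  have hgeom := summable_geometric_of_lt_one (exp_pos _).le (exp_lt_one_iff.2 (neg_lt_zero.2 ht))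
  have hone : 1 ≤ x ^ (1 - α) := one_le_rpow hx (by linarith)
  have hinv : (α * x ^ (α - 1) / 2)⁻¹ = 2 / α * x ^ (1 - α) := by
    rw [div_eq_mul_inv _ (2 : ℝ), mul_inv, inv_mul_rpow_sub_one hx0]; ring
  calc ∑' n : ℕ, exp (-(x + n) ^ α)
      ≤ ∑' n : ℕ, exp (-x ^ α) * (exp (-(α * x ^ (α - 1) / 2)) ^ n
          + exp (-(α / 2 * (n : ℝ) ^ α))) :=
        (summable_exp_neg_add_rpow hα0 hα1 hx0).tsum_le_tsum (exp_neg_add_rpow_le hα0 hα1 hx0)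
          ((hgeom.add hC).mul_left _)
    _ = exp (-x ^ α) * (∑' n : ℕ, exp (-(α * x ^ (α - 1) / 2)) ^ n + C) := by
        rw [tsum_mul_left, hgeom.tsum_add hC]
    _ ≤ exp (-x ^ α) * (1 + 2 / α * x ^ (1 - α) + C) := by
        gcongr
        simpa [hinv] using tsum_exp_neg_pow_le ht
    _ = exp (-x ^ α) * (2 / α * x ^ (1 - α) + (1 + C) * 1) := by ring
    _ ≤ exp (-x ^ α) * (2 / α * x ^ (1 - α) + (1 + C) * x ^ (1 - α)) := by gcongr
    _ = (2 / α + 1 + C) * x ^ (1 - α) * exp (-x ^ α) := by ring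

end Tail

/-- Discrete Laplace-type tail estimate: for `μ(x) = exp(−x^α)/Z` on `ℕ` with
`α ∈ (0,1)`, the tail `Σ_{y ≥ x} μ(y)` is comparable to `x^{1−α} exp(−x^α)`. -/
theorem tail_estimate (α : ℝ) (hα : α ∈ Set.Ioo (0:ℝ) 1)
    (Z : ℝ) (hZ : Z = ∑' n : ℕ, Real.exp (-(n : ℝ) ^ α))
    (μ : ℕ → ℝ) (hμ : ∀ n, μ n = Real.exp (-(n : ℝ) ^ α) / Z) :
    ∃ k ≥ (1:ℝ), ∀ x : ℕ, 1 ≤ x →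
      (1 / k) * (x : ℝ) ^ (1 - α) * Real.exp (-(x : ℝ) ^ α) ≤ (∑' n : ℕ, μ (x + n)) ∧
      (∑' n : ℕ, μ (x + n)) ≤ k * (x : ℝ) ^ (1 - α) * Real.exp (-(x : ℝ) ^ α) := by
  obtain ⟨hα0, hα1⟩ := hα
  have hsum : Summable fun n : ℕ => exp (-(n : ℝ) ^ α) := by
    simpa using summable_exp_neg_mul_rpow hα0 one_pos
  have hZ0 : 0 < Z := hZ ▸ hsum.tsum_pos (fun _ => (exp_pos _).le) 0 (exp_pos _)
  obtain ⟨K, hK⟩ := exists_tsum_le_rpow_mul_exp_neg_rpow hα0 hα1.le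
  set k := max 1 (max (Z * α) (K / Z))
  refine ⟨k, le_max_left _ _, fun x hx => ?_⟩
  have hx1 : (1 : ℝ) ≤ x := by exact_mod_cast hx
  have htail : ∑' n : ℕ, μ (x + n) = (∑' n : ℕ, exp (-((x : ℝ) + n) ^ α)) / Z := by
    simp_rw [hμ, Nat.cast_add]
    exact tsum_div_const
  have hZk : Z * α ≤ k := (le_max_left _ _).trans (le_max_right _ _)
  have hKk : K / Z ≤ k := (le_max_right _ _).trans (le_max_right _ _)
  rw [htail]
  constructor
  · calc 1 / k * (x : ℝ) ^ (1 - α) * exp (-(x : ℝ) ^ α)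
        ≤ 1 / (Z * α) * ((x : ℝ) ^ (1 - α) * exp (-(x : ℝ) ^ α)) := by
          rw [mul_assoc]; gcongr
      _ = (x : ℝ) ^ (1 - α) * exp (-(x : ℝ) ^ α) / α / Z := by field_simp
      _ ≤ _ := by gcongr; exact rpow_mul_exp_neg_rpow_div_le_tsum hα0 hα1.le (by positivity)
  · calc (∑' n : ℕ, exp (-((x : ℝ) + n) ^ α)) / Z
        ≤ K * (x : ℝ) ^ (1 - α) * exp (-(x : ℝ) ^ α) / Z := by gcongr; exact hK x hx1
      _ = K / Z * ((x : ℝ) ^ (1 - α) * exp (-(x : ℝ) ^ α)) := by ring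
      _ ≤ _ := by rw [mul_assoc]; gcongr
end

section
/- Let μ be a probability measure on a finite set L ⊆ ℝ^n-indexed product space satisfying a logarithmic Sobolev inequality with constant C. Suppose the entropy of the law of a Markov process at time 1 is bounded by a polynomial: Ent_μ(h_1) ≤ A·(1+n)^m, and entropy decays as Ent_μ(h_t) ≤ exp(−2(t−1)/C_n)·Ent_μ(h_1) with C_n ≤ C·n/log(n). If n = n(t) ∈ [ρt, ρt+1] for some ρ > 0 and C < 2/(ρ·m), then Ent_μ(h_t) → 0 as t → ∞. -/
open Real Filter Topology

/-!
Since `n(t) ≈ ρt`, the decay rate satisfies `2(t-1)/C_{n(t)} ≥ (2(t-1)/(C n(t))) log n(t)`, and the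
factor `2(t-1)/(C n(t))` tends to `2/(Cρ)`. So `exp(-2(t-1)/C_{n(t)}) ≤ n(t)^{-r}` eventually for any
`r < 2/(Cρ)`, and the hypothesis `C < 2/(ρm)` leaves room to choose `r > m`, so that this power of
`n(t)` beats the polynomial factor `(1 + n(t))^m`.
-/

lemma tendsto_div_self_of_linear_bounds {f : ℝ → ℝ} {ρ b : ℝ}
    (h : ∀ᶠ t in atTop, ρ * t ≤ f t ∧ f t ≤ ρ * t + b) :
    Tendsto (fun t => f t / t) atTop (𝓝 ρ) := by
  have hupper : Tendsto (fun t : ℝ => ρ + b * t⁻¹) atTop (𝓝 ρ) := by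
    simpa using tendsto_inv_atTop_zero.const_mul b |>.const_add ρ
  refine tendsto_of_tendsto_of_tendsto_of_le_of_le' tendsto_const_nhds hupper ?_ ?_ <;>
    filter_upwards [h, eventually_gt_atTop 0] with t ⟨hlo, hhi⟩ ht
  · rwa [le_div_iff₀ ht]
  · rw [div_le_iff₀ ht]
    calc f t ≤ ρ * t + b := hhi
      _ = (ρ + b * t⁻¹) * t := by field_simp

lemma tendsto_sub_one_div_of_linear_bounds {f : ℝ → ℝ} {ρ b : ℝ} (hρ : ρ ≠ 0)
    (h : ∀ᶠ t in atTop, ρ * t ≤ f t ∧ f t ≤ ρ * t + b) :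
    Tendsto (fun t => (t - 1) / f t) atTop (𝓝 ρ⁻¹) := by
  have hnum : Tendsto (fun t : ℝ => 1 - t⁻¹) atTop (𝓝 1) := by
    simpa using tendsto_inv_atTop_zero.const_sub (1 : ℝ)
  have hquot := hnum.div (tendsto_div_self_of_linear_bounds h) hρ
  rw [one_div] at hquot
  refine hquot.congr' ?_
  filter_upwards [eventually_gt_atTop 0] with t ht
  simp only [Pi.div_apply]
  field_simp

lemma exp_neg_div_le_rpow_neg {s c C N : ℝ} (hs : 0 ≤ s) (hc : 0 < c) (hN : 1 < N)
    (hcN : c ≤ C * N / log N) :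
    exp (-s / c) ≤ N ^ (-(s / (C * N))) := by
  have hlog : 0 < log N := log_pos hN
  have hCN : 0 < C * N := by
    have := hc.trans_le hcN
    rwa [div_pos_iff_of_pos_right hlog] at this
  have hrate : log N / (C * N) ≤ 1 / c := by
    rw [div_le_div_iff₀ hCN hc, one_mul, mul_comm]
    rwa [le_div_iff₀ hlog] at hcN
  rw [rpow_def_of_pos (by linarith), exp_le_exp]
  calc -s / c = -(s * (1 / c)) := by ring
    _ ≤ -(s * (log N / (C * N))) := by gcongr
    _ = log N * -(s / (C * N)) := by ring

lemma tendsto_rpow_neg_mul_one_add_pow {α : Type*} {l : Filter α} {N e : α → ℝ}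
    (hN : Tendsto N l atTop) {m : ℕ} {r : ℝ} (hmr : (m : ℝ) < r) (he : ∀ᶠ x in l, r ≤ e x) :
    Tendsto (fun x => N x ^ (-e x) * (1 + N x) ^ m) l (𝓝 0) := by
  have hlim : Tendsto (fun x => 2 ^ m * N x ^ (-(r - m))) l (𝓝 0) := by
    simpa using ((tendsto_rpow_neg_atTop (sub_pos.2 hmr)).comp hN).const_mul (2 ^ m : ℝ)
  refine squeeze_zero' ?_ ?_ hlim
  · filter_upwards [hN.eventually_ge_atTop 0] with x hx
    positivity
  filter_upwards [hN.eventually_ge_atTop 1, he] with x hx hex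
  have hN0 : 0 < N x := by linarith
  calc N x ^ (-e x) * (1 + N x) ^ m ≤ N x ^ (-r) * (2 * N x) ^ m := by
        gcongr
        all_goals linarith
    _ = 2 ^ m * N x ^ (-(r - m)) := by
        rw [mul_pow, ← rpow_natCast (N x), neg_sub, sub_eq_neg_add, rpow_add hN0]
        exact mul_left_comm _ _ _

theorem entropy_tends_to_zero_general (C ρ A : ℝ) (m : ℕ) (hρ : 0 < ρ)
    (hC : 0 < C) (hCm : C < 2 / (ρ * m))
    (Cls : ℕ → ℝ) (hCls_pos : ∀ n, 0 < Cls n)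
    (hCls : ∀ n : ℕ, 2 ≤ n → Cls n ≤ C * n / Real.log n)
    (n : ℝ → ℕ) (hn : ∀ t : ℝ, 1 ≤ t → ρ * t ≤ (n t : ℝ) ∧ (n t : ℝ) ≤ ρ * t + 1)
    (E : ℝ → ℝ) (hE0 : ∀ t, 0 ≤ E t)
    (hE : ∀ t : ℝ, 1 ≤ t →
      E t ≤ Real.exp (-2 * (t - 1) / Cls (n t)) * (A * (1 + (n t : ℝ)) ^ m)) :
    Tendsto E atTop (nhds 0) := by
  have hρm : 0 < ρ * m := (div_pos_iff_of_pos_left two_pos).1 (hC.trans hCm)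
  have hmK : (m : ℝ) < 2 / (C * ρ) := by
    rw [lt_div_iff₀ (by positivity)]
    rw [lt_div_iff₀ hρm] at hCm
    linarith
  obtain ⟨r, hmr, hrK⟩ := exists_between hmK
  have hn_atTop : ∀ᶠ t in atTop, ρ * t ≤ (n t : ℝ) ∧ (n t : ℝ) ≤ ρ * t + 1 :=
    eventually_atTop.2 ⟨1, hn⟩
  have hN : Tendsto (fun t => (n t : ℝ)) atTop atTop :=
    tendsto_atTop_mono' _ (hn_atTop.mono fun _ h => h.1) (tendsto_id.const_mul_atTop hρ)
  have hrate : Tendsto (fun t => 2 * (t - 1) / (C * n t)) atTop (𝓝 (2 / (C * ρ))) := by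
    convert (tendsto_sub_one_div_of_linear_bounds hρ.ne' hn_atTop).const_mul (2 / C) using 1
    · ext t; ring
    · congr 1; ring
  have hbound := (tendsto_rpow_neg_mul_one_add_pow hN hmr
    (hrate.eventually (eventually_ge_nhds hrK))).const_mul A
  rw [mul_zero] at hbound
  refine squeeze_zero' (.of_forall hE0) ?_ hbound
  filter_upwards [eventually_ge_atTop 1, hN.eventually_ge_atTop 2] with t ht hnt
  calc E t ≤ exp (-(2 * (t - 1)) / Cls (n t)) * (A * (1 + (n t : ℝ)) ^ m) := by
        simpa only [neg_mul] using hE t ht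
    _ ≤ (n t : ℝ) ^ (-(2 * (t - 1) / (C * n t))) * (A * (1 + (n t : ℝ)) ^ m) := by
        have hAX : 0 ≤ A * (1 + (n t : ℝ)) ^ m :=
          nonneg_of_mul_nonneg_right ((hE0 t).trans (hE t ht)) (exp_pos _)
        gcongr
        exact exp_neg_div_le_rpow_neg (by linarith) (hCls_pos _) (by linarith)
            (hCls _ (by exact_mod_cast hnt))
    _ = A * ((n t : ℝ) ^ (-(2 * (t - 1) / (C * n t))) * (1 + (n t : ℝ)) ^ m) := by ring

/-- Quantitative uniqueness step: if log-Sobolev constants grow sublinearly,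
`C_n ≤ C·n/log n`, the initial entropy is polynomially bounded, and the box size
scales linearly with time, `n(t) ∈ [ρt, ρt+1]`, then for `C < 2/(ρ·m)` the entropy
`E t ≤ exp(−2(t−1)/C_{n(t)})·A·(1+n(t))^m` tends to `0` as `t → ∞`. -/
theorem entropy_tends_to_zero (C ρ A : ℝ) (m : ℕ) (hρ : 0 < ρ) (hA : 0 < A)
    (hm : 1 ≤ m) (hC : 0 < C) (hCm : C < 2 / (ρ * m))
    (Cls : ℕ → ℝ) (hCls_pos : ∀ n, 0 < Cls n)
    (hCls : ∀ n : ℕ, 2 ≤ n → Cls n ≤ C * n / Real.log n)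
    (n : ℝ → ℕ) (hn : ∀ t : ℝ, 1 ≤ t → ρ * t ≤ (n t : ℝ) ∧ (n t : ℝ) ≤ ρ * t + 1)
    (E : ℝ → ℝ) (hE0 : ∀ t, 0 ≤ E t)
    (hE : ∀ t : ℝ, 1 ≤ t →
      E t ≤ Real.exp (-2 * (t - 1) / Cls (n t)) * (A * (1 + (n t : ℝ)) ^ m)) :
    Tendsto E atTop (nhds 0) :=
  entropy_tends_to_zero_general C ρ A m hρ hC hCm Cls hCls_pos hCls n hn E hE0 hE
end
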